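/- arXiv:2310.13866 — 3 statements merged into one kernel-verified Lean document; each statement's English description precedes it below -/
import Mathlib

section
/- Let β̃ > 0, γ̃ > 0, μ > 0, ρ̃ > 0 and set β = μβ̃, γ = γ̃ + β̃, ρ = ρ̃. Suppose S, I : ℝ → ℝ are differentiable on [0, T] and solve the classical SIR system S' = -β S I, I' = β S I - γ I with S(0) = 1, I(0) = ρ, and suppose x_S, x_D : ℝ → ℝ are differentiable on [0, T] and solve the Poisson-network SIR system x_S' = -β̃ x_D x_S, x_D' = β̃ μ x_D x_S - (β̃+γ̃) x_D with x_S(0) = 1, x_D(0) = μρ̃. Assume S, I, x_S, x_D are continuous on [0, T] and remain in a fixed bounded region where the right-hand sides are Lipschitz (e.g., all four functions take values in [0, K] for some K). Then S(t) = x_S(t) and I(t) = x_D(t)/μ for all t ∈ [0, T]. -/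
/-!
Dividing the second network equation by `μ` shows that `(x_S, x_D / μ)` solves the classical
SIR system with `β = μβ̃`, `γ = γ̃ + β̃` and the same initial data as `(S, I)`. The SIR vector
field is polynomial, hence Lipschitz on the compact set traced out by the two solutions on
`[0, T]`, so the two solutions coincide there.
-/

open Set

section Uniqueness

variable {E : Type*} [NormedAddCommGroup E] [NormedSpace ℝ E] {v : E → E} {f g : ℝ → E} {a b : ℝ}

theorem ContDiff.eqOn_Icc_of_hasDerivAt (hv : ContDiff ℝ 1 v)
    (hf : ∀ t ∈ Icc a b, HasDerivAt f (v (f t)) t)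
    (hg : ∀ t ∈ Icc a b, HasDerivAt g (v (g t)) t) (ha : f a = g a) :
    EqOn f g (Icc a b) := by
  have hf_cont : ContinuousOn f (Icc a b) := HasDerivAt.continuousOn hf
  have hg_cont : ContinuousOn g (Icc a b) := HasDerivAt.continuousOn hg
  set s := f '' Icc a b ∪ g '' Icc a b
  have hs : IsCompact s :=
    (isCompact_Icc.image_of_continuousOn hf_cont).union
      (isCompact_Icc.image_of_continuousOn hg_cont)
  obtain ⟨L, hL⟩ := hv.locallyLipschitz.locallyLipschitzOn.exists_lipschitzOnWith_of_compact hs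
  exact ODE_solution_unique_of_mem_Icc_right (v := fun _ => v) (s := fun _ => s)
    (fun _ _ => hL) hf_cont
    (fun t ht => (hf t (Ico_subset_Icc_self ht)).hasDerivWithinAt)
    (fun t ht => Or.inl (mem_image_of_mem f (Ico_subset_Icc_self ht))) hg_cont
    (fun t ht => (hg t (Ico_subset_Icc_self ht)).hasDerivWithinAt)
    (fun t ht => Or.inr (mem_image_of_mem g (Ico_subset_Icc_self ht))) ha

end Uniqueness

def sirField (β γ : ℝ) (p : ℝ × ℝ) : ℝ × ℝ :=
  (-β * p.1 * p.2, β * p.1 * p.2 - γ * p.2)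

theorem contDiff_sirField (β γ : ℝ) : ContDiff ℝ 1 (sirField β γ) := by
  unfold sirField
  fun_prop

theorem hasDerivAt_sirField_of_network {βt γt μ t : ℝ} {xS xD : ℝ → ℝ} (hμ : μ ≠ 0)
    (hxS : HasDerivAt xS (-βt * xD t * xS t) t)
    (hxD : HasDerivAt xD (βt * μ * xD t * xS t - (βt + γt) * xD t) t) :
    HasDerivAt (fun u => (xS u, xD u / μ))
      (sirField (μ * βt) (γt + βt) (xS t, xD t / μ)) t := by
  refine (hxS.prodMk (hxD.div_const μ)).congr_deriv ?_
  simp only [sirField, Prod.mk.injEq]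
  constructor
  · field_simp
  · field_simp
    ring

theorem classical_eq_network_sir_general
    (βt γt μ ρt T : ℝ) (hμ : 0 < μ)
    (β γ ρ : ℝ) (hβdef : β = μ * βt) (hγdef : γ = γt + βt) (hρdef : ρ = ρt)
    (S I xS xD : ℝ → ℝ)
    (hS : ∀ t ∈ Set.Icc (0:ℝ) T, HasDerivAt S (-β * S t * I t) t)
    (hI : ∀ t ∈ Set.Icc (0:ℝ) T, HasDerivAt I (β * S t * I t - γ * I t) t)
    (hS0 : S 0 = 1) (hI0 : I 0 = ρ)
    (hxS : ∀ t ∈ Set.Icc (0:ℝ) T, HasDerivAt xS (-βt * xD t * xS t) t)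
    (hxD : ∀ t ∈ Set.Icc (0:ℝ) T,
      HasDerivAt xD (βt * μ * xD t * xS t - (βt + γt) * xD t) t)
    (hxS0 : xS 0 = 1) (hxD0 : xD 0 = μ * ρt) :
    ∀ t ∈ Set.Icc (0:ℝ) T, S t = xS t ∧ I t = xD t / μ := by
  subst hβdef hγdef hρdef
  have hclassical : ∀ t ∈ Icc (0:ℝ) T, HasDerivAt (fun u => (S u, I u))
      (sirField (μ * βt) (γt + βt) (S t, I t)) t :=
    fun t ht => (hS t ht).prodMk (hI t ht)
  have hnetwork : ∀ t ∈ Icc (0:ℝ) T, HasDerivAt (fun u => (xS u, xD u / μ))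
      (sirField (μ * βt) (γt + βt) (xS t, xD t / μ)) t :=
    fun t ht => hasDerivAt_sirField_of_network hμ.ne' (hxS t ht) (hxD t ht)
  have hinit : (S 0, I 0) = (xS 0, xD 0 / μ) := by
    rw [hS0, hI0, hxS0, hxD0, mul_div_cancel_left₀ _ hμ.ne']
  intro t ht
  exact Prod.ext_iff.mp
    ((contDiff_sirField _ _).eqOn_Icc_of_hasDerivAt hclassical hnetwork hinit ht)

/-- Under the parameter matching `β = μβ̃`, `γ = γ̃ + β̃`, `ρ = ρ̃`, the classical
SIR solution and the Poisson-network SIR solution satisfy `S = x_S` and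
`I = x_D / μ` on `[0, T]` (uniqueness of solutions, assuming the solutions stay
in a bounded region `[0, K]`). -/
theorem classical_eq_network_sir
    (βt γt μ ρt T : ℝ) (hβt : 0 < βt) (hγt : 0 < γt) (hμ : 0 < μ) (hρt : 0 < ρt)
    (hT : 0 ≤ T)
    (β γ ρ : ℝ) (hβdef : β = μ * βt) (hγdef : γ = γt + βt) (hρdef : ρ = ρt)
    (S I xS xD : ℝ → ℝ)
    (hS : ∀ t ∈ Set.Icc (0:ℝ) T, HasDerivAt S (-β * S t * I t) t)
    (hI : ∀ t ∈ Set.Icc (0:ℝ) T, HasDerivAt I (β * S t * I t - γ * I t) t)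
    (hS0 : S 0 = 1) (hI0 : I 0 = ρ)
    (hxS : ∀ t ∈ Set.Icc (0:ℝ) T, HasDerivAt xS (-βt * xD t * xS t) t)
    (hxD : ∀ t ∈ Set.Icc (0:ℝ) T,
      HasDerivAt xD (βt * μ * xD t * xS t - (βt + γt) * xD t) t)
    (hxS0 : xS 0 = 1) (hxD0 : xD 0 = μ * ρt)
    (hScont : ContinuousOn S (Set.Icc 0 T))
    (hIcont : ContinuousOn I (Set.Icc 0 T))
    (hxScont : ContinuousOn xS (Set.Icc 0 T))
    (hxDcont : ContinuousOn xD (Set.Icc 0 T))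
    (K : ℝ)
    (hbound : ∀ t ∈ Set.Icc (0:ℝ) T,
      S t ∈ Set.Icc (0:ℝ) K ∧ I t ∈ Set.Icc (0:ℝ) K ∧
      xS t ∈ Set.Icc (0:ℝ) K ∧ xD t ∈ Set.Icc (0:ℝ) K) :
    ∀ t ∈ Set.Icc (0:ℝ) T, S t = xS t ∧ I t = xD t / μ :=
  classical_eq_network_sir_general βt γt μ ρt T hμ β γ ρ hβdef hγdef hρdef S I xS xD hS hI hS0 hI0
    hxS hxD hxS0 hxD0
end

section
/- Let μ > 0, β̃ > 0, γ̃ > 0, ρ̃ > 0, ρ > 0, β > 0 and let R₀N = μβ̃/(β̃+γ̃), R₀M > 0. If the two epidemic-curve right-hand sides coincide as functions of the susceptible fraction, i.e. μβ̃ (1 + ρ̃ - s - ln(s)/R₀N) s = β (1 + ρ - s - ln(s)/R₀M) s for every s ∈ (0, 1], then necessarily β = μβ̃, ρ = ρ̃, and R₀M = R₀N. -/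
open Real Set

/-- `1`, `s` and `log s` are linearly independent as functions on `(0, 1]`. -/
theorem eq_of_forall_Ioc_add_mul_add_mul_log_eq {a b c a' b' c' : ℝ}
    (h : ∀ s ∈ Ioc (0 : ℝ) 1, a + b * s + c * log s = a' + b' * s + c' * log s) :
    a = a' ∧ b = b' ∧ c = c' := by
  have h_one := h 1 ⟨one_pos, le_rfl⟩
  have h_half := h (1 / 2) ⟨by norm_num, by norm_num⟩
  have h_quarter := h (1 / 4) ⟨by norm_num, by norm_num⟩
  have log_half : log (1 / 2 : ℝ) = -log 2 := by rw [one_div, log_inv]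
  have log_quarter : log (1 / 4 : ℝ) = -(2 * log 2) := by
    rw [one_div, log_inv, show (4 : ℝ) = 2 ^ 2 by norm_num, log_pow, Nat.cast_ofNat]
  rw [log_one] at h_one
  rw [log_half] at h_half
  rw [log_quarter] at h_quarter
  have hb : b = b' := by linear_combination 4 * h_one + 4 * h_quarter - 8 * h_half
  have ha : a = a' := by linear_combination h_one - hb
  have hc : c * log 2 = c' * log 2 := by linear_combination ha + hb / 2 - h_half
  exact ⟨ha, hb, mul_right_cancel₀ (log_pos one_lt_two).ne' hc⟩

theorem epidemic_curve_coincide_only_if_general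
    (μ βt ρt ρ β : ℝ) (hμ : 0 < μ) (hβt : 0 < βt)
    (R₀N R₀M : ℝ)
    (heq : ∀ s ∈ Set.Ioc (0:ℝ) 1,
      μ * βt * (1 + ρt - s - Real.log s / R₀N) * s
        = β * (1 + ρ - s - Real.log s / R₀M) * s) :
    β = μ * βt ∧ ρ = ρt ∧ R₀M = R₀N := by
  have hA : μ * βt ≠ 0 := (mul_pos hμ hβt).ne'
  obtain ⟨h_const, h_lin, h_log⟩ := eq_of_forall_Ioc_add_mul_add_mul_log_eq
    (a := μ * βt * (1 + ρt)) (b := -(μ * βt)) (c := -(μ * βt / R₀N))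
    (a' := β * (1 + ρ)) (b' := -β) (c' := -(β / R₀M)) fun s hs => by
      linear_combination mul_right_cancel₀ hs.1.ne' (heq s hs)
  have hβ : β = μ * βt := (neg_inj.mp h_lin).symm
  subst hβ
  refine ⟨rfl, ?_, ?_⟩
  · linarith [mul_left_cancel₀ hA h_const]
  · simpa only [div_eq_mul_inv, neg_inj, mul_right_inj' hA, inv_inj] using h_log.symm

/-- If the network and mass-action epidemic-curve right-hand sides coincide as
functions of the susceptible fraction on `(0, 1]`, then necessarily `β = μβ̃`,
`ρ = ρ̃`, and `R₀^MA = R₀^NET`. -/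
theorem epidemic_curve_coincide_only_if
    (μ βt γt ρt ρ β : ℝ) (hμ : 0 < μ) (hβt : 0 < βt) (hγt : 0 < γt)
    (hρt : 0 < ρt) (hρ : 0 < ρ) (hβ : 0 < β)
    (R₀N R₀M : ℝ) (hR₀N : R₀N = μ * βt / (βt + γt)) (hR₀M : 0 < R₀M)
    (heq : ∀ s ∈ Set.Ioc (0:ℝ) 1,
      μ * βt * (1 + ρt - s - Real.log s / R₀N) * s
        = β * (1 + ρ - s - Real.log s / R₀M) * s) :
    β = μ * βt ∧ ρ = ρt ∧ R₀M = R₀N :=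
  epidemic_curve_coincide_only_if_general μ βt ρt ρ β hμ hβt R₀N R₀M heq
end

section
/- Let β̃ > 0, γ̃ > 0, μ > 0, ρ > 0. Suppose x_S, x_D, x_I : ℝ → ℝ are differentiable on [0, T] and satisfy x_S' = -β̃ x_D x_S, x_D' = β̃ μ x_D x_S - (β̃+γ̃) x_D, and x_I' = β̃ x_D x_S - γ̃ x_I on [0, T], with x_D(0) = μρ, x_I(0) = ρ, and x_D(t) ≥ 0 for all t ∈ [0, T]. Define I(t) = x_D(t)/μ (the matched mass-action infected proportion). Then I(t) ≤ x_I(t) for all t ∈ [0, T]; that is, the classical SIR infected curve never exceeds the true network infected proportion. -/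
/-!
The gap `e = x_I - x_D / μ` satisfies `e' = -γ̃ e + β̃ x_D / μ` with `e(0) = 0`.
The forcing term is nonnegative, so the integrating factor `exp (γ̃ t)` makes
`exp (γ̃ t) e(t)` nondecreasing, hence `e ≥ 0`.
-/

open Set

theorem nonneg_of_neg_mul_le_deriv {f f' : ℝ → ℝ} {a b c : ℝ}
    (hf : ContinuousOn f (Icc a b)) (hderiv : ∀ t ∈ Ioo a b, HasDerivAt f (f' t) t)
    (hineq : ∀ t ∈ Ioo a b, -c * f t ≤ f' t) (ha : 0 ≤ f a) :
    ∀ t ∈ Icc a b, 0 ≤ f t := by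
  have hmono : MonotoneOn (fun t => Real.exp (c * t) * f t) (Icc a b) := by
    refine monotoneOn_of_hasDerivWithinAt_nonneg
      (f' := fun t => Real.exp (c * t) * (c * f t + f' t)) (convex_Icc a b)
      ((Real.continuous_exp.comp (continuous_const_mul c)).continuousOn.mul hf)
      (fun t ht => ?_) (fun t ht => ?_) <;> rw [interior_Icc] at ht
    · have hexp : HasDerivAt (fun t => Real.exp (c * t)) (Real.exp (c * t) * c) t := by
        simpa using ((hasDerivAt_id t).const_mul c).exp
      exact ((hexp.mul (hderiv t ht)).congr_deriv (by ring)).hasDerivWithinAt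
    · have hsum : 0 ≤ c * f t + f' t := by linarith [hineq t ht]
      positivity
  intro t ht
  have hle := hmono (left_mem_Icc.2 (ht.1.trans ht.2)) ht ht.1
  exact nonneg_of_mul_nonneg_right ((mul_nonneg (Real.exp_pos _).le ha).trans hle) (Real.exp_pos _)

theorem matched_infected_le_network_general
    (βt γt μ ρ T : ℝ) (hβt : 0 < βt) (hμ : 0 < μ)
    (xS xD xI : ℝ → ℝ)
    (hxD : ∀ t ∈ Set.Icc (0:ℝ) T,
      HasDerivAt xD (βt * μ * xD t * xS t - (βt + γt) * xD t) t)
    (hxI : ∀ t ∈ Set.Icc (0:ℝ) T,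
      HasDerivAt xI (βt * xD t * xS t - γt * xI t) t)
    (hxD0 : xD 0 = μ * ρ) (hxI0 : xI 0 = ρ)
    (hxDpos : ∀ t ∈ Set.Icc (0:ℝ) T, 0 ≤ xD t) :
    ∀ t ∈ Set.Icc (0:ℝ) T, xD t / μ ≤ xI t := by
  have hgap : ∀ t ∈ Icc (0:ℝ) T, HasDerivAt (fun s => xI s - xD s / μ)
      (-γt * (xI t - xD t / μ) + βt * (xD t / μ)) t := fun t ht =>
    ((hxI t ht).sub ((hxD t ht).div_const μ)).congr_deriv (by field_simp; ring)
  have hgap_nonneg := nonneg_of_neg_mul_le_deriv (c := γt)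
    (fun t ht => (hgap t ht).continuousAt.continuousWithinAt)
    (fun t ht => hgap t (Ioo_subset_Icc_self ht))
    (fun t ht => by
      have hxDt := hxDpos t (Ioo_subset_Icc_self ht)
      have hforcing : 0 ≤ βt * (xD t / μ) := by positivity
      linarith)
    (by rw [hxD0, hxI0, mul_div_cancel_left₀ ρ hμ.ne', sub_self])
  exact fun t ht => sub_nonneg.1 (hgap_nonneg t ht)

/-- The matched mass-action infected proportion `I = x_D/μ` never exceeds the
true network infected proportion `x_I`. -/
theorem matched_infected_le_network
    (βt γt μ ρ T : ℝ) (hβt : 0 < βt) (hγt : 0 < γt) (hμ : 0 < μ) (hρ : 0 < ρ)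
    (hT : 0 ≤ T)
    (xS xD xI : ℝ → ℝ)
    (hxS : ∀ t ∈ Set.Icc (0:ℝ) T, HasDerivAt xS (-βt * xD t * xS t) t)
    (hxD : ∀ t ∈ Set.Icc (0:ℝ) T,
      HasDerivAt xD (βt * μ * xD t * xS t - (βt + γt) * xD t) t)
    (hxI : ∀ t ∈ Set.Icc (0:ℝ) T,
      HasDerivAt xI (βt * xD t * xS t - γt * xI t) t)
    (hxD0 : xD 0 = μ * ρ) (hxI0 : xI 0 = ρ)
    (hxDpos : ∀ t ∈ Set.Icc (0:ℝ) T, 0 ≤ xD t) :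
    ∀ t ∈ Set.Icc (0:ℝ) T, xD t / μ ≤ xI t :=
  matched_infected_le_network_general βt γt μ ρ T hβt hμ xS xD xI hxD hxI hxD0 hxI0 hxDpos
end
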